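/- Let X, Y be measurable spaces, let C_X and C_Y be the sets of all capacities on X and on Y, each equipped with its σ-algebra Σ_{C_X}, Σ_{C_Y}, and let h : X → Y be a measurable map. Then for every u ∈ C_X the pushforward u ∘ h⁻¹, defined by (u ∘ h⁻¹)(B) := u(h⁻¹(B)), is a capacity on Y, and the map L(h) : C_X → C_Y, u ↦ u ∘ h⁻¹, is measurable from (C_X, Σ_{C_X}) to (C_Y, Σ_{C_Y}). -/

import Mathlib

open MeasureTheory

/-- A capacity on a measurable space `X`. -/
def IsCapacity {X : Type*} [MeasurableSpace X] (u : Set X → ℝ) : Prop :=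
  u ∅ = 0 ∧ u Set.univ = 1 ∧
    ∀ A B : Set X, MeasurableSet A → MeasurableSet B → A ⊆ B → u A ≤ u B

/-- The σ-algebra `Σ_U` on a set `U` of capacities, generated by the evaluation maps
`u ↦ u(A)` for measurable `A`. -/
def capSigma {X : Type*} [MeasurableSpace X] (U : Set (Set X → ℝ)) :
    MeasurableSpace ↥U :=
  MeasurableSpace.generateFrom
    {S | ∃ (A : Set X) (Z : Set ℝ), MeasurableSet A ∧ MeasurableSet Z ∧
      S = {u : ↥U | u.1 A ∈ Z}}

theorem IsCapacity.comp_preimage {X Y : Type*} [MeasurableSpace X] [MeasurableSpace Y]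
    {u : Set X → ℝ} (hu : IsCapacity u) {h : X → Y} (hh : Measurable h) :
    IsCapacity (fun B : Set Y => u (h ⁻¹' B)) := by
  obtain ⟨h_empty, h_univ, h_mono⟩ := hu
  exact ⟨h_empty, h_univ, fun A B hA hB hAB =>
    h_mono _ _ (hh hA) (hh hB) (Set.preimage_mono hAB)⟩

section capSigma

variable {X : Type*} [MeasurableSpace X] {U : Set (Set X → ℝ)}

theorem measurable_capSigma_eval {A : Set X} (hA : MeasurableSet A) :
    Measurable[capSigma U] (fun u : ↥U => u.1 A) :=
  fun Z hZ => MeasurableSpace.measurableSet_generateFrom ⟨A, Z, hA, hZ, rfl⟩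

theorem measurable_capSigma_of_forall_eval {α : Type*} [MeasurableSpace α] {f : α → ↥U}
    (hf : ∀ A : Set X, MeasurableSet A → Measurable (fun a => (f a).1 A)) :
    @Measurable α ↥U _ (capSigma U) f := by
  refine @measurable_generateFrom α ↥U _ _ f ?_
  rintro S ⟨A, Z, hA, hZ, rfl⟩
  exact hf A hA hZ

end capSigma

/-- For a measurable `h : X → Y`, the pushforward `u ∘ h⁻¹` of a capacity is a capacity,
and the induced lift-up map `L(h) : C_X → C_Y` between the spaces of all capacities is
measurable with respect to the σ-algebras `Σ_{C_X}`, `Σ_{C_Y}`. -/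
theorem pushforward_capacity_and_liftup_measurable {X Y : Type*}
    [MeasurableSpace X] [MeasurableSpace Y] (h : X → Y) (hh : Measurable h)
    (L : ↥{u : Set X → ℝ | IsCapacity u} → ↥{v : Set Y → ℝ | IsCapacity v})
    (hL : ∀ (u : ↥{u : Set X → ℝ | IsCapacity u}) (B : Set Y),
      (L u).1 B = u.1 (h ⁻¹' B)) :
    (∀ u : Set X → ℝ, IsCapacity u → IsCapacity (fun B : Set Y => u (h ⁻¹' B))) ∧
    @Measurable ↥{u : Set X → ℝ | IsCapacity u} ↥{v : Set Y → ℝ | IsCapacity v}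
      (capSigma {u : Set X → ℝ | IsCapacity u})
      (capSigma {v : Set Y → ℝ | IsCapacity v}) L := by
  refine ⟨fun u hu => hu.comp_preimage hh, ?_⟩
  refine @measurable_capSigma_of_forall_eval _ _ _ _ (capSigma _) L fun B hB => ?_
  simpa only [hL] using measurable_capSigma_eval (hh hB)
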